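/- arXiv:1608.03815 — 4 statements merged into one kernel-verified Lean document; each statement's English description precedes it below -/
import Mathlib

section
/- For the uniform distribution on the unit disc, the distortion error of the circular sector between angles θ₁ and θ₂ relative to its own centroid equals V(θ₁,θ₂) = (9(θ₂−θ₁)² − 32 sin²((θ₂−θ₁)/2)) / (36π(θ₂−θ₁)). -/
open Real MeasureTheory intervalIntegral

set_option maxHeartbeats 1000000 in
theorem stmt_4 (θ₁ θ₂ : ℝ) (h1 : 0 < θ₂ - θ₁) (h2 : θ₂ - θ₁ ≤ 2 * π) :
    (∫ r in (0:ℝ)..1, ∫ θ in θ₁..θ₂, (r / π) *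
        ((r * Real.cos θ - 2 * (Real.sin θ₁ - Real.sin θ₂) / (3 * (θ₁ - θ₂))) ^ 2 +
         (r * Real.sin θ - (-(2 * (Real.cos θ₁ - Real.cos θ₂) / (3 * (θ₁ - θ₂))))) ^ 2)) =
      (9 * (θ₂ - θ₁) ^ 2 - 32 * Real.sin ((θ₂ - θ₁) / 2) ^ 2) / (36 * π * (θ₂ - θ₁)) := by
  have hΔ : θ₂ - θ₁ ≠ 0 := ne_of_gt h1
  have hπ : (π : ℝ) ≠ 0 := Real.pi_ne_zero
  set a : ℝ := 2 * (Real.sin θ₁ - Real.sin θ₂) / (3 * (θ₁ - θ₂)) with ha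
  set b : ℝ := -(2 * (Real.cos θ₁ - Real.cos θ₂) / (3 * (θ₁ - θ₂))) with hb
  have key : ∀ r : ℝ,
      (∫ θ in θ₁..θ₂, (r / π) * ((r * Real.cos θ - a) ^ 2 + (r * Real.sin θ - b) ^ 2))
        = (r / π) * ((r ^ 2 + a ^ 2 + b ^ 2) * (θ₂ - θ₁)
            - 2 * r * a * (Real.sin θ₂ - Real.sin θ₁)
            + 2 * r * b * (Real.cos θ₂ - Real.cos θ₁)) := by
    intro r
    have h := intervalIntegral.integral_eq_sub_of_hasDerivAt (a := θ₁) (b := θ₂)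
      (f := fun θ => (r / π) * ((r ^ 2 + a ^ 2 + b ^ 2) * θ
          - 2 * r * a * Real.sin θ + 2 * r * b * Real.cos θ))
      (f' := fun θ => (r / π) * ((r * Real.cos θ - a) ^ 2 + (r * Real.sin θ - b) ^ 2))
      (fun θ _ => by
        have hd : HasDerivAt (fun θ => (r / π) * ((r ^ 2 + a ^ 2 + b ^ 2) * θ
            - 2 * r * a * Real.sin θ + 2 * r * b * Real.cos θ))
            ((r / π) * (((r ^ 2 + a ^ 2 + b ^ 2) * 1 - 2 * r * a * Real.cos θ)
              + 2 * r * b * (-Real.sin θ))) θ := by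
          exact ((((hasDerivAt_id θ).const_mul _).sub
            ((Real.hasDerivAt_sin θ).const_mul _)).add
            ((Real.hasDerivAt_cos θ).const_mul _)).const_mul _
        refine hd.congr_deriv ?_
        have hsc := Real.sin_sq_add_cos_sq θ
        linear_combination (-(r ^ 3 / π)) * hsc)
      (Continuous.intervalIntegrable (by continuity) _ _)
    rw [h]; ring
  simp_rw [key]
  have h2 := intervalIntegral.integral_eq_sub_of_hasDerivAt (a := (0:ℝ)) (b := 1)
    (f := fun r => (1 / π) * ((θ₂ - θ₁) * r ^ 4 / 4 + (a ^ 2 + b ^ 2) * (θ₂ - θ₁) * r ^ 2 / 2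
        - (2 / 3) * a * (Real.sin θ₂ - Real.sin θ₁) * r ^ 3
        + (2 / 3) * b * (Real.cos θ₂ - Real.cos θ₁) * r ^ 3))
    (f' := fun r => (r / π) * ((r ^ 2 + a ^ 2 + b ^ 2) * (θ₂ - θ₁)
        - 2 * r * a * (Real.sin θ₂ - Real.sin θ₁)
        + 2 * r * b * (Real.cos θ₂ - Real.cos θ₁)))
    (fun r _ => by
      have hd : HasDerivAt (fun r : ℝ => (1 / π) * ((θ₂ - θ₁) * r ^ 4 / 4
          + (a ^ 2 + b ^ 2) * (θ₂ - θ₁) * r ^ 2 / 2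
          - (2 / 3) * a * (Real.sin θ₂ - Real.sin θ₁) * r ^ 3
          + (2 / 3) * b * (Real.cos θ₂ - Real.cos θ₁) * r ^ 3))
          ((1 / π) * ((θ₂ - θ₁) * (4 * r ^ 3) / 4
          + (a ^ 2 + b ^ 2) * (θ₂ - θ₁) * (2 * r ^ 1) / 2
          - (2 / 3) * a * (Real.sin θ₂ - Real.sin θ₁) * (3 * r ^ 2)
          + (2 / 3) * b * (Real.cos θ₂ - Real.cos θ₁) * (3 * r ^ 2))) r := by
        have h4 : HasDerivAt (fun r : ℝ => r ^ 4) (4 * r ^ 3) r := by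
          simpa using hasDerivAt_pow 4 r
        have h2' : HasDerivAt (fun r : ℝ => r ^ 2) (2 * r ^ 1) r := by
          simpa using hasDerivAt_pow 2 r
        have h3 : HasDerivAt (fun r : ℝ => r ^ 3) (3 * r ^ 2) r := by
          simpa using hasDerivAt_pow 3 r
        exact ((((h4.const_mul _).div_const _).add
          (((h2'.const_mul _).div_const _))).sub (h3.const_mul _) |>.add
          (h3.const_mul _)).const_mul _
      refine hd.congr_deriv ?_
      ring)
    (Continuous.intervalIntegrable (by continuity) _ _)
  rw [h2]
  have hQ : (Real.sin θ₂ - Real.sin θ₁) ^ 2 + (Real.cos θ₂ - Real.cos θ₁) ^ 2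
      = 2 - 2 * Real.cos (θ₂ - θ₁) := by
    have hc := Real.cos_sub θ₂ θ₁
    linear_combination Real.sin_sq_add_cos_sq θ₁ + Real.sin_sq_add_cos_sq θ₂ + 2 * hc
  have hhalf : Real.sin ((θ₂ - θ₁) / 2) ^ 2 = (1 - Real.cos (θ₂ - θ₁)) / 2 := by
    rw [Real.sin_sq, Real.cos_sq, show 2 * ((θ₂ - θ₁) / 2) = θ₂ - θ₁ by ring]
    ring
  have hcos : Real.cos (θ₂ - θ₁)
      = (2 - ((Real.sin θ₂ - Real.sin θ₁) ^ 2 + (Real.cos θ₂ - Real.cos θ₁) ^ 2)) / 2 := by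
    linarith [hQ]
  have hΔ' : θ₁ - θ₂ ≠ 0 := by intro h; apply hΔ; linarith
  rw [ha, hb, hhalf, hcos]
  field_simp
  ring
end

section
/- For the uniform distribution on the unit disc, the centroid of the right half-disc {x₁ ≥ 0} is (4/(3π), 0), and the total distortion error of the two-point configuration {(4/(3π),0), (−4/(3π),0)} (with Voronoi regions the right and left half-discs) equals (9π² − 32)/(18π²). -/
open Real MeasureTheory Set

lemma polarCoord_symm_eq (p : ℝ × ℝ) :
    polarCoord.symm p = (p.1 * cos p.2, p.1 * sin p.2) := rfl

lemma polar_wedge (f : ℝ × ℝ → ℝ) (hf : Continuous f)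
    (S : Set (ℝ × ℝ)) (hS : MeasurableSet S)
    (B : Set ℝ) (hB : MeasurableSet B) (hBsub : B ⊆ Icc (-π) π)
    (hEq : polarCoord.target ∩ (fun p : ℝ × ℝ => ((p.1 * cos p.2, p.1 * sin p.2) : ℝ × ℝ)) ⁻¹' S
      = Ioc (0:ℝ) 1 ×ˢ B) :
    ∫ p in S, f p = ∫ r in Ioc (0:ℝ) 1, ∫ θ in B, r * f (r * cos θ, r * sin θ) := by
  have hg : Continuous (fun p : ℝ × ℝ => ((p.1 * cos p.2, p.1 * sin p.2) : ℝ × ℝ)) :=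
    (continuous_fst.mul (continuous_cos.comp continuous_snd)).prodMk
      (continuous_fst.mul (continuous_sin.comp continuous_snd))
  rw [← integral_indicator hS, ← integral_comp_polarCoord_symm (S.indicator f)]
  have h1 : ∀ p : ℝ × ℝ, p.1 • S.indicator f (polarCoord.symm p)
      = ((fun p : ℝ × ℝ => ((p.1 * cos p.2, p.1 * sin p.2) : ℝ × ℝ)) ⁻¹' S).indicator
        (fun q : ℝ × ℝ => q.1 * f (q.1 * cos q.2, q.1 * sin q.2)) p := by
    intro p
    rw [polarCoord_symm_eq]
    by_cases h : ((p.1 * cos p.2, p.1 * sin p.2) : ℝ × ℝ) ∈ S <;>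
      simp [Set.indicator, h]
  simp_rw [h1]
  rw [setIntegral_indicator (hg.measurable hS), hEq]
  rw [Measure.volume_eq_prod, setIntegral_prod]
  have hcont : Continuous (fun q : ℝ × ℝ => q.1 * f (q.1 * cos q.2, q.1 * sin q.2)) :=
    continuous_fst.mul (hf.comp hg)
  exact (hcont.continuousOn.integrableOn_compact
    ((isCompact_Icc (a := (0:ℝ)) (b := 1)).prod (isCompact_Icc (a := -π) (b := π)))).mono_set
    (Set.prod_mono Ioc_subset_Icc_self hBsub)

lemma hEq_half :
    polarCoord.target ∩ (fun p : ℝ × ℝ => ((p.1 * cos p.2, p.1 * sin p.2) : ℝ × ℝ)) ⁻¹'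
      {p : ℝ × ℝ | p.1 ^ 2 + p.2 ^ 2 ≤ 1 ∧ 0 ≤ p.1}
    = Ioc (0:ℝ) 1 ×ˢ Icc (-(π/2)) (π/2) := by
  have ht : polarCoord.target = Ioi (0:ℝ) ×ˢ Ioo (-π) π := rfl
  ext ⟨r, θ⟩
  simp only [ht, mem_inter_iff, mem_prod, mem_Ioi, mem_Ioo, mem_preimage, mem_setOf_eq,
    mem_Ioc, mem_Icc]
  have hpyth := sin_sq_add_cos_sq θ
  have key : (r * cos θ) ^ 2 + (r * sin θ) ^ 2 = r ^ 2 := by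
    have : (r * cos θ) ^ 2 + (r * sin θ) ^ 2 = r ^ 2 * (sin θ ^ 2 + cos θ ^ 2) := by ring
    rw [this, hpyth, mul_one]
  constructor
  · rintro ⟨⟨hr, hθ1, hθ2⟩, hle, hx⟩
    have hcos : 0 ≤ cos θ := by nlinarith
    constructor
    · constructor
      · exact hr
      · nlinarith
    · constructor
      · by_contra h
        push_neg at h
        have h1 : π / 2 < -θ := by linarith
        have h2 : -θ < π + π / 2 := by linarith [pi_pos]
        have := cos_neg_of_pi_div_two_lt_of_lt h1 h2
        rw [cos_neg] at this
        linarith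
      · by_contra h
        push_neg at h
        have := cos_neg_of_pi_div_two_lt_of_lt h (by linarith [pi_pos])
        linarith
  · rintro ⟨⟨hr, hr1⟩, hθ1, hθ2⟩
    have hcos : 0 ≤ cos θ := cos_nonneg_of_mem_Icc ⟨hθ1, hθ2⟩
    refine ⟨⟨hr, by linarith [pi_pos], by linarith [pi_pos]⟩, by nlinarith,
      mul_nonneg hr.le hcos⟩

lemma hEq_full :
    polarCoord.target ∩ (fun p : ℝ × ℝ => ((p.1 * cos p.2, p.1 * sin p.2) : ℝ × ℝ)) ⁻¹'
      {p : ℝ × ℝ | p.1 ^ 2 + p.2 ^ 2 ≤ 1}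
    = Ioc (0:ℝ) 1 ×ˢ Ioo (-π) π := by
  have ht : polarCoord.target = Ioi (0:ℝ) ×ˢ Ioo (-π) π := rfl
  ext ⟨r, θ⟩
  simp only [ht, mem_inter_iff, mem_prod, mem_Ioi, mem_Ioo, mem_preimage, mem_setOf_eq, mem_Ioc]
  have hpyth := sin_sq_add_cos_sq θ
  have key : (r * cos θ) ^ 2 + (r * sin θ) ^ 2 = r ^ 2 := by
    have : (r * cos θ) ^ 2 + (r * sin θ) ^ 2 = r ^ 2 * (sin θ ^ 2 + cos θ ^ 2) := by ring
    rw [this, hpyth, mul_one]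
  constructor
  · rintro ⟨⟨hr, hθ⟩, hle⟩
    exact ⟨⟨hr, by nlinarith⟩, hθ⟩
  · rintro ⟨⟨hr, hr1⟩, hθ⟩
    exact ⟨⟨hr, hθ⟩, by nlinarith⟩

lemma hHD : MeasurableSet {p : ℝ × ℝ | p.1 ^ 2 + p.2 ^ 2 ≤ 1 ∧ 0 ≤ p.1} := by
  rw [Set.setOf_and]
  exact (measurableSet_le (by fun_prop) measurable_const).inter
    (measurableSet_le measurable_const (by fun_prop))

lemma hD : MeasurableSet {p : ℝ × ℝ | p.1 ^ 2 + p.2 ^ 2 ≤ 1} :=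
  measurableSet_le (by fun_prop) measurable_const

lemma hsub_half : Icc (-(π/2)) (π/2) ⊆ Icc (-π) π :=
  Icc_subset_Icc (by linarith [pi_pos]) (by linarith [pi_pos])

lemma cubic_int (a3 a2 a1 a0 : ℝ) :
    ∫ r in (0:ℝ)..1, (a3*r^3 + a2*r^2 + a1*r + a0) = a3/4 + a2/3 + a1/2 + a0 := by
  rw [intervalIntegral.integral_eq_sub_of_hasDerivAt
    (f := fun r => a3*(r^4/4) + a2*(r^3/3) + (a1*(r^2/2) + a0*r))
    (fun x _ => by
      have h := ((((hasDerivAt_pow 4 x).div_const 4).const_mul a3).add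
          (((hasDerivAt_pow 3 x).div_const 3).const_mul a2)).add
          ((((hasDerivAt_pow 2 x).div_const 2).const_mul a1).add
            ((hasDerivAt_id' (𝕜 := ℝ)  x).const_mul a0))
      convert h using 1
      · rfl
      push_cast; ring)
    ((Continuous.intervalIntegrable (by fun_prop) _ _))]
  norm_num
  ring

lemma int_cos_half : ∫ θ in Icc (-(π/2)) (π/2), cos θ = 2 := by
  rw [integral_Icc_eq_integral_Ioc, ← intervalIntegral.integral_of_le (by linarith [pi_pos]),
    integral_cos]
  simp
  norm_num

lemma int_sin_half : ∫ θ in Icc (-(π/2)) (π/2), sin θ = 0 := by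
  rw [integral_Icc_eq_integral_Ioc, ← intervalIntegral.integral_of_le (by linarith [pi_pos]),
    integral_sin]
  simp

lemma int_abs_cos : ∫ θ in (-π)..π, |cos θ| = 4 := by
  have hi : ∀ a b : ℝ, IntervalIntegrable (fun θ => |cos θ|) volume a b :=
    fun a b => (continuous_abs.comp continuous_cos).intervalIntegrable a b
  rw [← intervalIntegral.integral_add_adjacent_intervals (a := -π) (b := -(π/2)) (c := π)
      (hi _ _) (hi _ _),
    ← intervalIntegral.integral_add_adjacent_intervals (a := -(π/2)) (b := π/2) (c := π)
      (hi _ _) (hi _ _)]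
  have h1 : ∫ θ in (-π)..(-(π/2)), |cos θ| = ∫ θ in (-π)..(-(π/2)), -cos θ := by
    apply intervalIntegral.integral_congr
    intro θ hθ
    rw [uIcc_of_le (by linarith [pi_pos])] at hθ
    have : cos θ ≤ 0 := by
      have := cos_nonpos_of_pi_div_two_le_of_le (x := -θ) (by linarith [hθ.2]) (by linarith [hθ.1, pi_pos])
      rwa [cos_neg] at this
    simp [abs_of_nonpos this]
  have h2 : ∫ θ in (-(π/2))..(π/2), |cos θ| = ∫ θ in (-(π/2))..(π/2), cos θ := by
    apply intervalIntegral.integral_congr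
    intro θ hθ
    rw [uIcc_of_le (by linarith [pi_pos])] at hθ
    simp [abs_of_nonneg (cos_nonneg_of_mem_Icc hθ)]
  have h3 : ∫ θ in (π/2)..π, |cos θ| = ∫ θ in (π/2)..π, -cos θ := by
    apply intervalIntegral.integral_congr
    intro θ hθ
    rw [uIcc_of_le (by linarith [pi_pos])] at hθ
    have : cos θ ≤ 0 := cos_nonpos_of_pi_div_two_le_of_le hθ.1 (by linarith [hθ.2, pi_pos])
    simp [abs_of_nonpos this]
  rw [h1, h2, h3, intervalIntegral.integral_neg, intervalIntegral.integral_neg,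
    integral_cos, integral_cos, integral_cos]
  simp
  norm_num

lemma A1 : ∫ p in {p : ℝ × ℝ | p.1 ^ 2 + p.2 ^ 2 ≤ 1 ∧ 0 ≤ p.1}, p.1 = 2/3 := by
  rw [polar_wedge (fun p => p.1) continuous_fst _ hHD _ measurableSet_Icc hsub_half hEq_half]
  have inner : ∀ r : ℝ,
      (∫ θ in Icc (-(π/2)) (π/2), r * ((r * cos θ, r * sin θ) : ℝ × ℝ).1) = (r*r) * 2 := by
    intro r
    simp_rw [show ∀ θ : ℝ, r * ((r * cos θ, r * sin θ) : ℝ × ℝ).1 = (r*r) * cos θ from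
      fun θ => by show r * (r * cos θ) = _; ring]
    rw [MeasureTheory.integral_const_mul, int_cos_half]
  simp_rw [inner]
  rw [← intervalIntegral.integral_of_le zero_le_one,
    intervalIntegral.integral_congr (g := fun r => (0:ℝ)*r^3 + 2*r^2 + 0*r + 0)
      (fun r _ => by ring), cubic_int]
  ring

lemma A2 : ∫ p in {p : ℝ × ℝ | p.1 ^ 2 + p.2 ^ 2 ≤ 1 ∧ 0 ≤ p.1}, (1:ℝ) = π/2 := by
  rw [polar_wedge (fun _ => (1:ℝ)) continuous_const _ hHD _ measurableSet_Icc hsub_half hEq_half]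
  have inner : ∀ r : ℝ, (∫ _θ in Icc (-(π/2)) (π/2), r * (1:ℝ)) = π * r := by
    intro r
    simp_rw [mul_one]
    rw [setIntegral_const, measureReal_def, Real.volume_Icc, show (π/2 - -(π/2)) = π by ring,
      ENNReal.toReal_ofReal pi_pos.le, smul_eq_mul]
  simp_rw [inner]
  rw [← intervalIntegral.integral_of_le zero_le_one,
    intervalIntegral.integral_congr (g := fun r => (0:ℝ)*r^3 + 0*r^2 + π*r + 0)
      (fun r _ => by ring), cubic_int]
  ring

lemma A3 : ∫ p in {p : ℝ × ℝ | p.1 ^ 2 + p.2 ^ 2 ≤ 1 ∧ 0 ≤ p.1}, p.2 = 0 := by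
  rw [polar_wedge (fun p => p.2) continuous_snd _ hHD _ measurableSet_Icc hsub_half hEq_half]
  have inner : ∀ r : ℝ,
      (∫ θ in Icc (-(π/2)) (π/2), r * ((r * cos θ, r * sin θ) : ℝ × ℝ).2) = 0 := by
    intro r
    simp_rw [show ∀ θ : ℝ, r * ((r * cos θ, r * sin θ) : ℝ × ℝ).2 = (r*r) * sin θ from
      fun θ => by show r * (r * sin θ) = _; ring]
    rw [MeasureTheory.integral_const_mul, int_sin_half, mul_zero]
  simp_rw [inner]
  simp

lemma A4 : (∫ p in {p : ℝ × ℝ | p.1 ^ 2 + p.2 ^ 2 ≤ 1}, (1 / π) *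
      min ((p.1 - 4 / (3 * π)) ^ 2 + p.2 ^ 2) ((p.1 + 4 / (3 * π)) ^ 2 + p.2 ^ 2)) =
    (9 * π ^ 2 - 32) / (18 * π ^ 2) := by
  set c : ℝ := 4 / (3 * π) with hc
  have hc0 : 0 ≤ c := by rw [hc]; positivity
  have hmin : ∀ p : ℝ × ℝ, (1 / π) * min ((p.1 - c) ^ 2 + p.2 ^ 2) ((p.1 + c) ^ 2 + p.2 ^ 2)
      = 1/π * (p.1^2 + p.2^2 + c^2 - 2*c*|p.1|) := by
    intro p
    rcases le_total 0 p.1 with h | h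
    · rw [min_eq_left (by nlinarith), abs_of_nonneg h]; ring_nf
    · rw [min_eq_right (by nlinarith), abs_of_nonpos h]; ring_nf
  simp_rw [hmin]
  rw [polar_wedge (fun p => 1/π * (p.1^2 + p.2^2 + c^2 - 2*c*|p.1|)) (by fun_prop) _ hD _
    measurableSet_Ioo Ioo_subset_Icc_self hEq_full]
  rw [setIntegral_congr_fun measurableSet_Ioc
    (g := fun r => 2*r^3 + (-(8*c/π))*r^2 + 2*c^2*r + 0) ?_]
  · rw [← intervalIntegral.integral_of_le zero_le_one, cubic_int, hc]
    have hπ := pi_ne_zero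
    field_simp
    ring
  · intro r hr
    simp only
    have h0 : 0 ≤ r := hr.1.le
    have key : ∀ θ : ℝ, r * (1/π * ((r*cos θ)^2 + (r*sin θ)^2 + c^2 - 2*c*|r*cos θ|))
        = r*(r^2+c^2)/π - (2*c*r^2/π) * |cos θ| := by
      intro θ
      have h1 : |r * cos θ| = r * |cos θ| := by rw [abs_mul, abs_of_nonneg h0]
      have h2 : (r*cos θ)^2 + (r*sin θ)^2 = r^2 := by
        have hp := sin_sq_add_cos_sq θ
        have : (r*cos θ)^2 + (r*sin θ)^2 = r^2 * (sin θ^2 + cos θ^2) := by ring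
        rw [this, hp, mul_one]
      rw [h1, h2]
      ring
    simp_rw [key]
    rw [← integral_Ioc_eq_integral_Ioo,
      ← intervalIntegral.integral_of_le (by linarith [pi_pos] : -π ≤ π),
      intervalIntegral.integral_sub intervalIntegrable_const
        ((Continuous.intervalIntegrable (by fun_prop) _ _)),
      intervalIntegral.integral_const, intervalIntegral.integral_const_mul, int_abs_cos,
      smul_eq_mul]
    have hπ := pi_ne_zero
    field_simp
    ring

theorem stmt_5 :
    ((∫ p in {p : ℝ × ℝ | p.1 ^ 2 + p.2 ^ 2 ≤ 1 ∧ 0 ≤ p.1}, p.1 / π) /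
        (∫ p in {p : ℝ × ℝ | p.1 ^ 2 + p.2 ^ 2 ≤ 1 ∧ 0 ≤ p.1}, 1 / π) = 4 / (3 * π)) ∧
    ((∫ p in {p : ℝ × ℝ | p.1 ^ 2 + p.2 ^ 2 ≤ 1 ∧ 0 ≤ p.1}, p.2 / π) = 0) ∧
    ((∫ p in {p : ℝ × ℝ | p.1 ^ 2 + p.2 ^ 2 ≤ 1}, (1 / π) *
        min ((p.1 - 4 / (3 * π)) ^ 2 + p.2 ^ 2) ((p.1 + 4 / (3 * π)) ^ 2 + p.2 ^ 2)) =
      (9 * π ^ 2 - 32) / (18 * π ^ 2)) := by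
  refine ⟨?_, ?_, A4⟩
  · rw [MeasureTheory.integral_div, MeasureTheory.integral_div, A1, A2]
    have hπ := pi_ne_zero
    field_simp
    ring
  · rw [MeasureTheory.integral_div, A3, zero_div]
end

section
/- For the uniform distribution on the unit square [0,1]², the distortion error of the two-point set {(1/4, 1/2), (3/4, 1/2)} equals 5/48, i.e., ∫₀^{1/2}∫₀¹ ((x₁−1/4)² + (x₂−1/2)²) dx₂dx₁ + ∫_{1/2}^{1}∫₀¹ ((x₁−3/4)² + (x₂−1/2)²) dx₂dx₁ = 5/48. -/
open Real MeasureTheory intervalIntegral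

lemma inner_int (c k a b : ℝ) :
    (∫ x in a..b, (c + (x - k) ^ 2)) =
      c*(b-a) + ((b-k)^3 - (a-k)^3)/3 := by
  have : (∫ x in a..b, (c + (x - k) ^ 2))
      = (∫ x in a..b, c) + ∫ x in a..b, (x - k)^2 :=
    intervalIntegral.integral_add intervalIntegrable_const
      (((continuous_id.sub continuous_const).pow 2).intervalIntegrable a b)
  rw [this, intervalIntegral.integral_const,
    intervalIntegral.integral_comp_sub_right (fun x => x^2) k,
    integral_pow]
  rw [smul_eq_mul]
  push_cast
  ring

theorem stmt_10 :
    (∫ x₁ in (0:ℝ)..(1/2), ∫ x₂ in (0:ℝ)..1,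
        ((x₁ - 1/4) ^ 2 + (x₂ - 1/2) ^ 2)) +
    (∫ x₁ in (1/2:ℝ)..1, ∫ x₂ in (0:ℝ)..1,
        ((x₁ - 3/4) ^ 2 + (x₂ - 1/2) ^ 2)) = 5 / 48 := by
  have h1 : (∫ x₁ in (0:ℝ)..(1/2), ∫ x₂ in (0:ℝ)..1,
      ((x₁ - 1/4) ^ 2 + (x₂ - 1/2) ^ 2))
      = ∫ x₁ in (0:ℝ)..(1/2), (((1:ℝ)/12) + (x₁-1/4)^2) := by
    refine intervalIntegral.integral_congr fun x hx => ?_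
    rw [inner_int ((x-1/4)^2) (1/2) 0 1]; ring
  have h2 : (∫ x₁ in (1/2:ℝ)..1, ∫ x₂ in (0:ℝ)..1,
      ((x₁ - 3/4) ^ 2 + (x₂ - 1/2) ^ 2))
      = ∫ x₁ in (1/2:ℝ)..1, (((1:ℝ)/12) + (x₁-3/4)^2) := by
    refine intervalIntegral.integral_congr fun x hx => ?_
    rw [inner_int ((x-3/4)^2) (1/2) 0 1]; ring
  rw [h1, h2, inner_int, inner_int]
  norm_num
end

section
/- Let P be the distribution on ℝ with density f(x) = 2/5 on [0,1/2], 8/5 on (1/2,1], 0 otherwise. The function D(a,b) = ∫₀^{1/2}(2/5)(x−a)²dx + ∫_{1/2}^{(a+b)/2}(8/5)(x−a)²dx + ∫_{(a+b)/2}^{1}(8/5)(x−b)²dx, defined for 0 < a ≤ 1/2 ≤ (a+b)/2 < b < 1, attains its minimum value 317/15360 at (a,b) = (11/32, 25/32). -/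
open Real MeasureTheory intervalIntegral

lemma integ_sq (c a l u : ℝ) :
    (∫ x in l..u, c * (x - a) ^ 2) = c * ((u - a) ^ 3 - (l - a) ^ 3) / 3 := by
  have h : ∀ x ∈ Set.uIcc l u,
      HasDerivAt (fun x : ℝ => c * (x - a) ^ 3 / 3) (c * (x - a) ^ 2) x := by
    intro x _
    have h1 : HasDerivAt (fun x : ℝ => (x - a) ^ 3) (3 * (x - a) ^ 2 * 1) x := by
      simpa using (((hasDerivAt_id x).sub_const a).fun_pow 3)
    have := (h1.const_mul c).div_const 3
    refine this.congr_deriv ?_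
    ring
  have hint : IntervalIntegrable (fun x : ℝ => c * (x - a) ^ 2) volume l u :=
    (Continuous.intervalIntegrable (by continuity) l u)
  have := intervalIntegral.integral_eq_sub_of_hasDerivAt h hint
  rw [this]; ring

/-- Distortion error of the two-point set `{a, b}` for the distribution with density
`2/5` on `[0,1/2]` and `8/5` on `(1/2,1]`, when the Voronoi boundary `(a+b)/2` lies in
`[1/2, 1]`. -/
noncomputable def D2 (a b : ℝ) : ℝ :=
  (∫ x in (0:ℝ)..(1/2), (2/5) * (x - a) ^ 2) +
  (∫ x in (1/2:ℝ)..((a + b)/2), (8/5) * (x - a) ^ 2) +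
  (∫ x in ((a + b)/2)..1, (8/5) * (x - b) ^ 2)

lemma D2_eq (a b : ℝ) : D2 a b =
    (2/15)*a^3 - (2/5)*(1/2 - a)^3 + (2/15)*(b - a)^3 + (8/15)*(1 - b)^3 := by
  simp only [D2, integ_sq]
  ring

theorem stmt_16 :
    (0 < (11:ℝ)/32 ∧ (11:ℝ)/32 ≤ 1/2 ∧ (1:ℝ)/2 ≤ ((11:ℝ)/32 + 25/32)/2 ∧
      ((11:ℝ)/32 + 25/32)/2 < 25/32 ∧ (25:ℝ)/32 < 1) ∧
    D2 (11/32) (25/32) = 317 / 15360 ∧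
    ∀ a b : ℝ, 0 < a → a ≤ 1/2 → 1/2 ≤ (a + b)/2 → (a + b)/2 < b → b < 1 →
      317 / 15360 ≤ D2 a b := by
  refine ⟨⟨by norm_num, by norm_num, by norm_num, by norm_num, by norm_num⟩, ?_, ?_⟩
  · rw [D2_eq]; norm_num
  · intro a b h1 h2 h3 h4 h5
    rw [D2_eq]
    have hab : a < b := by linarith
    nlinarith [sq_nonneg (a - 11/32), sq_nonneg (b - 25/32), sq_nonneg (a + b - 36/32),
      sq_nonneg (b - a - 14/32), mul_nonneg (sq_nonneg (a - 11/32)) h1.le,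
      mul_nonneg (sq_nonneg (b - 25/32)) (by linarith : (0:ℝ) ≤ 1 - b),
      mul_nonneg (sq_nonneg (a - 11/32)) (by linarith : (0:ℝ) ≤ 1/2 - a),
      mul_nonneg (sq_nonneg (b - 25/32)) (by linarith : (0:ℝ) ≤ b - a),
      mul_nonneg (sq_nonneg (a - 11/32)) (by linarith : (0:ℝ) ≤ a + b - 1)]
end
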